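/- arXiv:2304.04076 — 2 statements merged into one kernel-verified Lean document; each statement's English description precedes it below -/
import Mathlib

section
/- Let thresholds satisfy τ_t = τ_{t+1} + v̄ for all t, with v̄ > 0, and define states recursively by y_{t+1} = y_t − v_t where v_t = min(v̄, max(y_t − τ_t, 0)). If y_{t₀} > τ_{t₀}, then y_t ≥ τ_t + v̄ for all t > t₀, hence v_t = v̄ for all t > t₀. -/
theorem stmt_1 (τ y v : ℕ → ℝ) (vbar : ℝ) (hvbar : vbar > 0)
    (hτ : ∀ t, τ t = τ (t + 1) + vbar)
    (hpol : ∀ t, v t = min vbar (max (y t - τ t) 0))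
    (hy : ∀ t, y (t + 1) = y t - v t)
    (t₀ : ℕ) (h0 : y t₀ > τ t₀) :
    ∀ t, t > t₀ → y t ≥ τ t + vbar ∧ v t = vbar := by
  have key : ∀ t, t > t₀ → y t ≥ τ t + vbar := by
    intro t ht
    induction t with
    | zero => omega
    | succ n ih =>
      rcases Nat.lt_or_ge t₀ n with h | h
      · have hn := ih h
        have hv : v n = vbar := by
          rw [hpol n]
          exact min_eq_left (le_max_of_le_left (by linarith))
        have := hy n
        have := hτ n
        linarith
      · have hn : n = t₀ := by omega
        subst hn
        have hvb : v n ≤ vbar := by rw [hpol n]; exact min_le_left _ _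
        have hvd : v n ≤ y n - τ n := by
          rw [hpol n]
          exact le_trans (min_le_right _ _) (max_le (le_refl _) (by linarith))
        have := hy n
        have := hτ n
        linarith
  intro t ht
  refine ⟨key t ht, ?_⟩
  rw [hpol t]
  exact min_eq_left (le_max_of_le_left (by have := key t ht; linarith))
end

section
/- Let W : ℝ → ℝ be concave and define for y ∈ ℝ the optimal charging v*(y) = argmax over v ∈ [0, min(v̄, y)] of −c·v + W(y − v), for c ≥ 0. Then the map y ↦ y − v*(y) (post-decision state) is nondecreasing in y, for any selection of maximizers. -/
/-!
In terms of the post-decision state `x = y - v` the objective is `c * x + W x - c * y`, to be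
maximized over `x ∈ [max 0 (y - vbar), y]`, an interval whose endpoints increase with `y`. A concave
`W` is continuous, so the greatest maximizer exists. If `y₁ ≤ y₂` had greatest maximizers
`x₁ > x₂`, each would be feasible for the other problem, so the two values tie and `x₁` contradicts
the maximality of `x₂`.
-/

open Set

def argmaxOn {α β : Type*} [Preorder β] (f : α → β) (s : Set α) : Set α :=
  {x ∈ s | IsMaxOn f s x}

section

variable {α β : Type*} [TopologicalSpace α] [LinearOrder β] [TopologicalSpace β]
  [OrderClosedTopology β] {f : α → β} {s : Set α}

theorem IsCompact.argmaxOn_nonempty (hs : IsCompact s) (hne : s.Nonempty)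
    (hf : ContinuousOn f s) : (argmaxOn f s).Nonempty :=
  hs.exists_isMaxOn hne hf

theorem isCompact_argmaxOn [T2Space α] (hs : IsCompact s) (hne : s.Nonempty)
    (hf : ContinuousOn f s) : IsCompact (argmaxOn f s) := by
  obtain ⟨x₀, hx₀, hmax⟩ := hs.argmaxOn_nonempty hne hf
  have : argmaxOn f s = s ∩ f ⁻¹' Ici (f x₀) := by
    ext x
    exact and_congr_right fun hx =>
      ⟨fun hx' => hx' hx₀, fun hx' z hz => (hmax hz).trans hx'⟩
  rw [this]
  exact hs.of_isClosed_subset (hf.preimage_isClosed_of_isClosed hs.isClosed isClosed_Ici)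
    inter_subset_left

end

theorem isGreatest_sSup_argmaxOn {α β : Type*} [ConditionallyCompleteLinearOrder α]
    [TopologicalSpace α] [OrderTopology α] [LinearOrder β] [TopologicalSpace β]
    [OrderClosedTopology β] {f : α → β} {s : Set α} (hs : IsCompact s) (hne : s.Nonempty)
    (hf : ContinuousOn f s) : IsGreatest (argmaxOn f s) (sSup (argmaxOn f s)) :=
  (isCompact_argmaxOn hs hne hf).isGreatest_sSup (hs.argmaxOn_nonempty hne hf)

theorem IsGreatest.le_of_argmaxOn_Icc {α β : Type*} [LinearOrder α] [Preorder β] {f : α → β}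
    {a₁ b₁ a₂ b₂ x₁ x₂ : α} (h₁ : IsGreatest (argmaxOn f (Icc a₁ b₁)) x₁)
    (h₂ : IsGreatest (argmaxOn f (Icc a₂ b₂)) x₂) (ha : a₁ ≤ a₂) (hb : b₁ ≤ b₂) :
    x₁ ≤ x₂ := by
  obtain ⟨⟨⟨-, hb₁⟩, hmax₁⟩, -⟩ := h₁
  obtain ⟨⟨⟨ha₂, -⟩, hmax₂⟩, hgreatest₂⟩ := h₂
  by_contra! hlt
  have hx₂ : f x₂ ≤ f x₁ := hmax₁ ⟨ha.trans ha₂, hlt.le.trans hb₁⟩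
  refine hlt.not_ge (hgreatest₂ ⟨⟨ha₂.trans hlt.le, hb₁.trans hb⟩, fun z hz => ?_⟩)
  exact (hmax₂ hz).trans hx₂

theorem sub_mem_Icc_iff_mem_Icc_min {v y r : ℝ} :
    y - v ∈ Icc (max 0 (y - r)) y ↔ v ∈ Icc 0 (min r y) := by
  simp only [mem_Icc, max_le_iff, le_min_iff]
  constructor
  · rintro ⟨⟨h₀, h₁⟩, h₂⟩; exact ⟨by linarith, by linarith, by linarith⟩
  · rintro ⟨h₀, h₁, h₂⟩; exact ⟨⟨by linarith, by linarith⟩, by linarith⟩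

theorem stmt_18_general (W : ℝ → ℝ) (hW : ConcaveOn ℝ Set.univ W)
    (c vbar : ℝ) (hvbar : 0 < vbar) :
    ∃ σ : ℝ → ℝ,
      (∀ y ∈ Set.Ici (0:ℝ), σ y ∈ Set.Icc (0:ℝ) (min vbar y) ∧
        ∀ v ∈ Set.Icc (0:ℝ) (min vbar y),
          -c * v + W (y - v) ≤ -c * σ y + W (y - σ y)) ∧
      MonotoneOn (fun y => y - σ y) (Set.Ici (0:ℝ)) := by
  set f : ℝ → ℝ := fun x => c * x + W x
  have hf : Continuous f :=
    continuous_const.mul continuous_id |>.add (continuousOn_univ.1 (hW.continuousOn isOpen_univ))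
  set post : ℝ → ℝ := fun y => sSup (argmaxOn f (Icc (max 0 (y - vbar)) y))
  have hpost (y : ℝ) (hy : 0 ≤ y) : IsGreatest (argmaxOn f (Icc (max 0 (y - vbar)) y)) (post y) :=
    isGreatest_sSup_argmaxOn isCompact_Icc
      (nonempty_Icc.2 (max_le hy (by linarith))) hf.continuousOn
  refine ⟨fun y => y - post y, fun y hy => ?_, fun y₁ hy₁ y₂ hy₂ hy => ?_⟩
  · obtain ⟨⟨hmem, hmax⟩, -⟩ := hpost y hy
    refine ⟨sub_mem_Icc_iff_mem_Icc_min.1 (by rwa [sub_sub_cancel]), fun v hv => ?_⟩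
    have : f (y - v) ≤ f (post y) := hmax (sub_mem_Icc_iff_mem_Icc_min.2 hv)
    simp only [sub_sub_cancel, f] at this ⊢
    linarith
  · simp only [sub_sub_cancel]
    exact (hpost y₁ hy₁).le_of_argmaxOn_Icc (hpost y₂ hy₂)
      (max_le_max le_rfl (sub_le_sub_right hy _)) hy

theorem stmt_18 (W : ℝ → ℝ) (hW : ConcaveOn ℝ Set.univ W)
    (c vbar : ℝ) (hc : 0 ≤ c) (hvbar : 0 < vbar) :
    ∃ σ : ℝ → ℝ,
      (∀ y ∈ Set.Ici (0:ℝ), σ y ∈ Set.Icc (0:ℝ) (min vbar y) ∧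
        ∀ v ∈ Set.Icc (0:ℝ) (min vbar y),
          -c * v + W (y - v) ≤ -c * σ y + W (y - σ y)) ∧
      MonotoneOn (fun y => y - σ y) (Set.Ici (0:ℝ)) :=
  stmt_18_general W hW c vbar hvbar
end
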